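/- The action of a proper orthochronous Lorentz transformation Λ on the open unit ball B ⊂ ℝ³ given by (v_i) ↦ (Λ_{i0} + Σ_k Λ_{ik} v_k)/(Λ_{00} + Σ_k Λ_{0k} v_k) is well defined (the denominator satisfies |Λ_{00} + Σ_k Λ_{0k} v_k| ≥ √(1 + Σ_k Λ_{0k}²) − √(Σ_k Λ_{0k}²) > 0 for |v| < 1) and is jointly continuous in (Λ, v) with respect to the operator norm on Λ and the Euclidean metric on B. -/

import Mathlib

noncomputable section

open scoped BigOperators

abbrev E3 := EuclideanSpace ℝ (Fin 3)

/-- The Minkowski quadratic form on ℝ⁴ (coordinates `Fin 4 → ℝ`). -/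
def minkQ4 (x : Fin 4 → ℝ) : ℝ := x 0 ^ 2 - ∑ i : Fin 3, x i.succ ^ 2

/-- The projective action of a Lorentz matrix on the open unit ball of ℝ³,
`v_i ↦ (Λ_{i0} + Σ_k Λ_{ik} v_k)/(Λ_{00} + Σ_k Λ_{0k} v_k)`. -/
def matAct (Λ : Matrix (Fin 4) (Fin 4) ℝ) (v : E3) : E3 := WithLp.toLp 2 (fun i : Fin 3 =>
  (Λ i.succ 0 + ∑ k : Fin 3, Λ i.succ k.succ * v k) /
    (Λ 0 0 + ∑ k : Fin 3, Λ 0 k.succ * v k))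


/-!
Writing η = diag(1, -1, -1, -1), preservation of the Minkowski form says Λᵀ η Λ = η. As η² = 1,
the matrix η Λᵀ η is a left and hence a right inverse of Λ, so also Λ η Λᵀ = η, whose (0,0) entry
reads Λ₀₀² = 1 + |a|² for the first row a = (Λ₀ₖ). On the closed unit ball Cauchy–Schwarz gives
|⟨a, v⟩| ≤ |a|, so the denominator Λ₀₀ + ⟨a, v⟩ is at least √(1 + |a|²) - |a| > 0. Away from the
zeros of its denominator the action is a quotient of polynomials in (Λ, v), hence continuous.
-/

open Matrix

theorem Matrix.eq_zero_of_forall_dotProduct_mulVec_self_eq_zero {n K : Type*} [Fintype n]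
    [DecidableEq n] [Field K] [NeZero (2 : K)] {N : Matrix n n K} (hN : Nᵀ = N)
    (h : ∀ x : n → K, x ⬝ᵥ N *ᵥ x = 0) : N = 0 := by
  ext i j
  have hij := h (Pi.single i 1 + Pi.single j 1)
  have hii := h (Pi.single i 1)
  have hjj := h (Pi.single j 1)
  have hsym : N j i = N i j := by rw [← transpose_apply N i j, hN]
  simp only [mulVec_add, dotProduct_add, add_dotProduct, mulVec_single_one, single_dotProduct,
    col_apply, one_mul] at hij hii hjj
  have : (2 : K) * N i j = 0 := by linear_combination hij - hii - hjj - hsym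
  exact (mul_eq_zero.mp this).resolve_left two_ne_zero

theorem Matrix.transpose_mul_mul_eq_of_forall_dotProduct_mulVec {n K : Type*} [Fintype n]
    [DecidableEq n] [Field K] [NeZero (2 : K)] {η Λ : Matrix n n K} (hη : ηᵀ = η)
    (h : ∀ x : n → K, Λ *ᵥ x ⬝ᵥ η *ᵥ (Λ *ᵥ x) = x ⬝ᵥ η *ᵥ x) : Λᵀ * η * Λ = η := by
  rw [← sub_eq_zero]
  refine eq_zero_of_forall_dotProduct_mulVec_self_eq_zero
    (by simp [transpose_mul, hη, mul_assoc]) fun x => ?_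
  rw [sub_mulVec, dotProduct_sub, ← h x, ← mulVec_mulVec, ← mulVec_mulVec, dotProduct_mulVec,
    vecMul_transpose, sub_self]

theorem Matrix.mul_mul_transpose_eq_of_transpose_mul_mul_eq {n R : Type*} [Fintype n]
    [DecidableEq n] [CommRing R] {η Λ : Matrix n n R} (hη : η * η = 1) (h : Λᵀ * η * Λ = η) :
    Λ * η * Λᵀ = η := by
  have hleft : (η * Λᵀ * η) * Λ = 1 := by
    rw [mul_assoc, mul_assoc, ← mul_assoc Λᵀ, h, hη]
  have hright : Λ * (η * Λᵀ * η) = 1 := mul_eq_one_comm.mp hleft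
  calc Λ * η * Λᵀ = Λ * (η * Λᵀ * η) * η := by simp only [mul_assoc, hη, mul_one]
    _ = η := by rw [hright, one_mul]

def minkowskiMetric : Matrix (Fin 4) (Fin 4) ℝ := diagonal (Fin.cons 1 fun _ => -1)

theorem minkowskiMetric_transpose : minkowskiMetricᵀ = minkowskiMetric := diagonal_transpose _

theorem minkowskiMetric_mul_self : minkowskiMetric * minkowskiMetric = 1 := by
  rw [minkowskiMetric, diagonal_mul_diagonal, ← diagonal_one]
  congr 1
  ext i
  cases i using Fin.cases <;> simp

theorem minkQ4_eq_dotProduct (x : Fin 4 → ℝ) : minkQ4 x = x ⬝ᵥ minkowskiMetric *ᵥ x := by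
  simp [minkQ4, minkowskiMetric, dotProduct, mulVec_diagonal, Fin.sum_univ_succ (n := 3), sq,
    sub_eq_add_neg]

theorem lorentz_zero_zero_sq {Λ : Matrix (Fin 4) (Fin 4) ℝ}
    (hΛ : ∀ x : Fin 4 → ℝ, minkQ4 (Λ *ᵥ x) = minkQ4 x) :
    Λ 0 0 ^ 2 = 1 + ∑ k : Fin 3, Λ 0 k.succ ^ 2 := by
  have hcol : Λᵀ * minkowskiMetric * Λ = minkowskiMetric :=
    transpose_mul_mul_eq_of_forall_dotProduct_mulVec minkowskiMetric_transpose
      fun x => by simpa only [minkQ4_eq_dotProduct] using hΛ x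
  have hrow := congrFun₂
    (mul_mul_transpose_eq_of_transpose_mul_mul_eq minkowskiMetric_mul_self hcol) 0 0
  rw [minkowskiMetric, mul_apply] at hrow
  simp only [mul_diagonal, diagonal_apply_eq, transpose_apply, Fin.sum_univ_succ (n := 3),
    Fin.cons_zero, Fin.cons_succ] at hrow
  rw [Fin.sum_univ_three] at hrow ⊢
  linear_combination hrow

theorem abs_sum_mul_le_sqrt_sum_sq {ι : Type*} [Fintype ι] (a : ι → ℝ) {v : EuclideanSpace ℝ ι}
    (hv : ‖v‖ ≤ 1) : |∑ k, a k * v k| ≤ √(∑ k, a k ^ 2) := by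
  refine Real.abs_le_sqrt ?_
  have hv2 : ∑ k, v k ^ 2 ≤ 1 := by
    rw [← EuclideanSpace.real_norm_sq_eq]
    exact pow_le_one₀ (norm_nonneg v) hv
  calc (∑ k, a k * v k) ^ 2 ≤ (∑ k, a k ^ 2) * ∑ k, v k ^ 2 :=
        Finset.sum_mul_sq_le_sq_mul_sq _ _ _
    _ ≤ ∑ k, a k ^ 2 := mul_le_of_le_one_right (by positivity) hv2

theorem lorentz_denom_bound {Λ : Matrix (Fin 4) (Fin 4) ℝ}
    (hΛ : ∀ x : Fin 4 → ℝ, minkQ4 (Λ *ᵥ x) = minkQ4 x) (h0 : 0 ≤ Λ 0 0) {v : E3} (hv : ‖v‖ ≤ 1) :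
    (√(1 + ∑ k : Fin 3, Λ 0 k.succ ^ 2) - √(∑ k : Fin 3, Λ 0 k.succ ^ 2)
        ≤ |Λ 0 0 + ∑ k : Fin 3, Λ 0 k.succ * v k|) ∧
      0 < Λ 0 0 + ∑ k : Fin 3, Λ 0 k.succ * v k := by
  set s := ∑ k : Fin 3, Λ 0 k.succ ^ 2
  set t := ∑ k : Fin 3, Λ 0 k.succ * v k
  have hΛ00 : Λ 0 0 = √(1 + s) := by rw [← lorentz_zero_zero_sq hΛ, Real.sqrt_sq h0]
  have ht : |t| ≤ √s := abs_sum_mul_le_sqrt_sum_sq _ hv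
  have hgap : 0 < √(1 + s) - √s :=
    sub_pos.2 (Real.sqrt_lt_sqrt (by positivity) (lt_one_add s))
  have hle : √(1 + s) - √s ≤ Λ 0 0 + t := by
    rw [hΛ00]
    linarith [neg_abs_le t]
  exact ⟨hle.trans (le_abs_self _), hgap.trans_le hle⟩

theorem continuousOn_matAct :
    ContinuousOn (fun p : Matrix (Fin 4) (Fin 4) ℝ × E3 => matAct p.1 p.2)
      {p | p.1 0 0 + ∑ k : Fin 3, p.1 0 k.succ * p.2 k ≠ 0} :=
  (PiLp.continuous_toLp 2 _).comp_continuousOn <| continuousOn_pi.2 fun _ =>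
    ContinuousOn.div (by fun_prop) (by fun_prop) fun _ hp => hp

/-- The projective action of a proper orthochronous Lorentz transformation on the open
unit ball is well defined (the denominator obeys the stated lower bound and is
positive) and is jointly continuous in the matrix and the point (Fact A.12). -/
theorem stmt15 :
    (∀ Λ : Matrix (Fin 4) (Fin 4) ℝ,
      (∀ x : Fin 4 → ℝ, minkQ4 (Λ.mulVec x) = minkQ4 x) → 1 ≤ Λ 0 0 →
      ∀ v : E3, ‖v‖ < 1 →
        (Real.sqrt (1 + ∑ k : Fin 3, Λ 0 k.succ ^ 2) -
            Real.sqrt (∑ k : Fin 3, Λ 0 k.succ ^ 2)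
          ≤ |Λ 0 0 + ∑ k : Fin 3, Λ 0 k.succ * v k|) ∧
        0 < Λ 0 0 + ∑ k : Fin 3, Λ 0 k.succ * v k) ∧
    ContinuousOn (fun p : Matrix (Fin 4) (Fin 4) ℝ × E3 => matAct p.1 p.2)
      {p | (∀ x : Fin 4 → ℝ, minkQ4 (p.1.mulVec x) = minkQ4 x) ∧
            1 ≤ p.1 0 0 ∧ ‖p.2‖ < 1} := by
  refine ⟨fun _ hΛ h0 _ hv => lorentz_denom_bound hΛ (zero_le_one.trans h0) hv.le, ?_⟩
  exact continuousOn_matAct.mono fun _ ⟨hΛ, h0, hv⟩ =>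
    (lorentz_denom_bound hΛ (zero_le_one.trans h0) hv.le).2.ne'
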